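/- arXiv:2107.08164 — 3 statements merged into one kernel-verified Lean document; each statement's English description precedes it below -/
import Mathlib

section
/- (Correctness of the quantum collision detection protocol with a unique sender.) Let n ≥ 2 and j ∈ Fin n, and let ψ = X_{{j}} ψ_W be the n-qubit W state with a Pauli-X applied to qubit j. Then every bitstring x with ψ(x) ≠ 0 has Hamming weight 0 or 2; moreover the total Born-rule probability of outcomes of Hamming weight 0 equals 1/n and the total probability of outcomes of Hamming weight 2 equals (n−1)/n, so both weights occur with positive probability. -/
/-!
Flipping qubit `j` changes the Hamming weight of a bitstring by exactly one, so `X_{j}` carries the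
weight-one support of `ψ_W` onto bitstrings of weight `0` or `2`; the only one of weight `0` is `0`,
the preimage of `e_j`, which carries probability `1/n`. Since `X_{j}` permutes coordinates it is
an isometry, and `ψ_W` is a unit vector because there are `n.choose 1 = n` strings of weight one;
hence the weight-two outcomes carry the remaining probability `1 - 1/n`.
-/

/-- Hamming weight of a bitstring. -/
def hammingWt {n : ℕ} (x : Fin n → ZMod 2) : ℕ :=
  (Finset.univ.filter fun i => x i = 1).card

/-- The `n`-qubit W state: amplitude `1/√n` on each Hamming-weight-1 bitstring. -/
noncomputable def wState (n : ℕ) : EuclideanSpace ℂ (Fin n → ZMod 2) :=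
  WithLp.toLp 2 (fun x => if hammingWt x = 1 then ((1 / Real.sqrt n : ℝ) : ℂ) else 0)

/-- Indicator bitstring of a set of qubits. -/
def chi {n : ℕ} (S : Finset (Fin n)) : Fin n → ZMod 2 :=
  fun i => if i ∈ S then 1 else 0

/-- Pauli-X flip on the qubits in `S`. -/
noncomputable def pauliX {n : ℕ} (S : Finset (Fin n))
    (ψ : EuclideanSpace ℂ (Fin n → ZMod 2)) : EuclideanSpace ℂ (Fin n → ZMod 2) :=
  WithLp.toLp 2 (fun x => ψ (x + chi S))

/-- Bitstring with a single 1 in position `i`. -/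
def eVec {n : ℕ} (i : Fin n) : Fin n → ZMod 2 :=
  fun j => if j = i then 1 else 0

open Finset

lemma ZMod.eq_zero_or_eq_one (a : ZMod 2) : a = 0 ∨ a = 1 := by
  revert a; decide

lemma chi_apply_eq_one_iff {n : ℕ} (S : Finset (Fin n)) (i : Fin n) : chi S i = 1 ↔ i ∈ S := by
  by_cases h : i ∈ S <;> simp [chi, h]

def bitsEquivFinset (n : ℕ) : (Fin n → ZMod 2) ≃ Finset (Fin n) where
  toFun x := {i | x i = 1}
  invFun := chi
  left_inv x := by
    funext i
    rcases ZMod.eq_zero_or_eq_one (x i) with h | h <;> simp [chi, h]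
  right_inv S := by ext i; simp [chi_apply_eq_one_iff]

lemma hammingWt_eq_card_bitsEquivFinset {n : ℕ} (x : Fin n → ZMod 2) :
    hammingWt x = #(bitsEquivFinset n x) := rfl

lemma hammingWt_chi {n : ℕ} (S : Finset (Fin n)) : hammingWt (chi S) = #S :=
  congrArg card ((bitsEquivFinset n).apply_symm_apply S)

lemma card_filter_hammingWt_eq (n k : ℕ) :
    #{x : Fin n → ZMod 2 | hammingWt x = k} = n.choose k := by
  calc #{x : Fin n → ZMod 2 | hammingWt x = k}
      = Fintype.card {x : Fin n → ZMod 2 // hammingWt x = k} := (Fintype.card_subtype _).symm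
    _ = Fintype.card {S : Finset (Fin n) // #S = k} :=
      Fintype.card_congr ((bitsEquivFinset n).subtypeEquiv fun _ => Iff.rfl)
    _ = n.choose k := by simp

lemma hammingWt_eq_zero_iff {n : ℕ} {x : Fin n → ZMod 2} : hammingWt x = 0 ↔ x = 0 := by
  have chi_empty : chi (∅ : Finset (Fin n)) = 0 := by funext i; simp [chi]
  rw [hammingWt_eq_card_bitsEquivFinset, card_eq_zero, ← Equiv.eq_symm_apply]
  exact iff_of_eq (congrArg (x = ·) chi_empty)

lemma hammingWt_add_chi_singleton {n : ℕ} (x : Fin n → ZMod 2) (j : Fin n) :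
    hammingWt (x + chi {j}) = hammingWt x + 1 ∨ hammingWt (x + chi {j}) + 1 = hammingWt x := by
  have flip (i : Fin n) : (x + chi {j}) i = if i = j then x i + 1 else x i := by
    by_cases hij : i = j <;> simp [chi, hij]
  simp only [hammingWt]
  rcases ZMod.eq_zero_or_eq_one (x j) with h | h
  · left
    rw [← card_insert_of_notMem (s := {i | x i = 1}) (a := j) (by simp [h])]
    congr 1; ext i
    by_cases hij : i = j <;> simp [flip, hij, h]
  · right
    rw [← card_erase_add_one (s := {i | x i = 1}) (a := j) (by simp [h])]
    congr 2; ext i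
    by_cases hij : i = j <;> simp [flip, hij, h]

lemma hammingWt_eq_zero_or_two_of_add_chi_singleton {n : ℕ} {x : Fin n → ZMod 2} {j : Fin n}
    (h : hammingWt (x + chi {j}) = 1) : hammingWt x = 0 ∨ hammingWt x = 2 := by
  rcases hammingWt_add_chi_singleton x j with h' | h' <;> omega

lemma pauliX_apply {n : ℕ} (S : Finset (Fin n)) (ψ : EuclideanSpace ℂ (Fin n → ZMod 2))
    (x : Fin n → ZMod 2) : pauliX S ψ x = ψ (x + chi S) := rfl

lemma norm_pauliX {n : ℕ} (S : Finset (Fin n)) (ψ : EuclideanSpace ℂ (Fin n → ZMod 2)) :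
    ‖pauliX S ψ‖ = ‖ψ‖ := by
  simp only [EuclideanSpace.norm_eq, pauliX_apply]
  exact congrArg Real.sqrt (Equiv.sum_comp (Equiv.addRight (chi S)) (fun y => ‖ψ y‖ ^ 2))

lemma norm_sq_wState_apply (n : ℕ) (x : Fin n → ZMod 2) :
    ‖wState n x‖ ^ 2 = if hammingWt x = 1 then 1 / (n : ℝ) else 0 := by
  simp only [wState, PiLp.toLp_apply]
  split_ifs
  · rw [Complex.norm_real, norm_div, norm_one, Real.norm_of_nonneg (Real.sqrt_nonneg _), div_pow,
      one_pow, Real.sq_sqrt n.cast_nonneg]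
  · simp

lemma norm_wState {n : ℕ} (hn : 0 < n) : ‖wState n‖ = 1 := by
  rw [← pow_eq_one_iff_of_nonneg (norm_nonneg _) two_ne_zero, EuclideanSpace.norm_sq_eq]
  simp_rw [norm_sq_wState_apply, sum_ite, sum_const_zero, add_zero, sum_const,
    card_filter_hammingWt_eq, Nat.choose_one_right, nsmul_eq_mul]
  field_simp

theorem stmt1 (n : ℕ) (hn : 2 ≤ n) (j : Fin n) :
    (∀ x : Fin n → ZMod 2, pauliX {j} (wState n) x ≠ 0 →
        hammingWt x = 0 ∨ hammingWt x = 2) ∧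
    (∑ x ∈ Finset.univ.filter (fun x : Fin n → ZMod 2 => hammingWt x = 0),
        ‖pauliX {j} (wState n) x‖ ^ 2 = (1 : ℝ) / n) ∧
    (∑ x ∈ Finset.univ.filter (fun x : Fin n → ZMod 2 => hammingWt x = 2),
        ‖pauliX {j} (wState n) x‖ ^ 2 = ((n : ℝ) - 1) / n) ∧
    (0 : ℝ) < (1 : ℝ) / n ∧ (0 : ℝ) < ((n : ℝ) - 1) / n := by
  set ψ := pauliX {j} (wState n)
  have support (x : Fin n → ZMod 2) (hx : ψ x ≠ 0) : hammingWt x = 0 ∨ hammingWt x = 2 := by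
    apply hammingWt_eq_zero_or_two_of_add_chi_singleton (j := j)
    by_contra h
    exact hx (by simp [ψ, pauliX_apply, wState, h])
  have weight_zero : ∑ x with hammingWt x = 0, ‖ψ x‖ ^ 2 = 1 / (n : ℝ) := by
    rw [filter_congr fun x _ ↦ hammingWt_eq_zero_iff, filter_eq' univ 0, if_pos (mem_univ _),
      sum_singleton, pauliX_apply, zero_add, norm_sq_wState_apply, hammingWt_chi, card_singleton,
      if_pos rfl]
  have total :
      ∑ x with hammingWt x = 0, ‖ψ x‖ ^ 2 + ∑ x with hammingWt x = 2, ‖ψ x‖ ^ 2 = 1 := by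
    rw [← sum_union (disjoint_filter.2 fun x _ h ↦ by omega), ← filter_or,
      sum_filter_of_ne fun x _ hx ↦ support x (by simpa using hx), ← EuclideanSpace.norm_sq_eq,
      norm_pauliX, norm_wState (by omega), one_pow]
  have hn' : (2 : ℝ) ≤ n := by exact_mod_cast hn
  refine ⟨support, weight_zero, ?_, by positivity, div_pos (by linarith) (by linarith)⟩
  rw [eq_sub_of_add_eq' total, weight_zero]
  field_simp
end

section
/- (The collision detection protocol counts the number of senders.) Let n ≥ 2, let S ⊆ Fin n, and let i be a natural number with i + 2 ≤ n. If under the state X_S ψ_W there exists an outcome of Hamming weight i with positive Born-rule probability and also an outcome of Hamming weight i+2 with positive Born-rule probability, then |S| = i + 1. -/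
/-!
The ones of `x + χ_S` are the ones of `x` symmetric-differenced with `S`. An outcome `x` of
`X_S ψ_W` has nonzero amplitude only if this set is a singleton, so its weight is `|S| ± 1`;
outcomes of weights `i` and `i + 2` can then only coexist when `|S| = i + 1`.
-/

open Finset
open scoped symmDiff

theorem Finset.card_add_one_eq_or_eq_card_add_one_of_symmDiff_eq_singleton {α : Type*}
    [DecidableEq α] {A S : Finset α} {j : α} (h : A ∆ S = {j}) :
    #A + 1 = #S ∨ #A = #S + 1 := by
  have hA : A = {j} ∆ S := by rw [← h, symmDiff_symmDiff_cancel_right]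
  by_cases hj : j ∈ S
  · have : A = S.erase j := by
      rw [hA]; ext k; by_cases hk : k = j <;> simp [mem_symmDiff, hk, hj]
    exact .inl (this ▸ card_erase_add_one hj)
  · have : A = insert j S := by
      rw [hA]; ext k; by_cases hk : k = j <;> simp [mem_symmDiff, hk, hj]
    exact .inr (this ▸ card_insert_of_notMem hj)

theorem filter_add_chi_eq_one_eq_symmDiff {n : ℕ} (S : Finset (Fin n)) (x : Fin n → ZMod 2) :
    univ.filter (fun i => (x + chi S) i = 1) = univ.filter (fun i => x i = 1) ∆ S := by
  ext i
  simp only [mem_filter_univ, mem_symmDiff]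
  have hx : x i = 0 ∨ x i = 1 := by generalize x i = a; decide +revert
  by_cases hi : i ∈ S <;> rcases hx with hx | hx <;> simp [chi, hi, hx]

theorem hammingWt_add_one_eq_card_or_of_pauliX_wState_ne_zero {n : ℕ} {S : Finset (Fin n)}
    {x : Fin n → ZMod 2} (h : pauliX S (wState n) x ≠ 0) :
    hammingWt x + 1 = #S ∨ hammingWt x = #S + 1 := by
  have hwt : hammingWt (x + chi S) = 1 := by
    by_contra hne
    exact h (by simp [pauliX, wState, hne])
  obtain ⟨j, hj⟩ := card_eq_one.mp hwt
  rw [filter_add_chi_eq_one_eq_symmDiff] at hj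
  exact card_add_one_eq_or_eq_card_add_one_of_symmDiff_eq_singleton hj

theorem stmt3_general (n : ℕ) (S : Finset (Fin n)) (i : ℕ)
    (h1 : ∃ x : Fin n → ZMod 2, hammingWt x = i ∧
        0 < ‖pauliX S (wState n) x‖ ^ 2)
    (h2 : ∃ x : Fin n → ZMod 2, hammingWt x = i + 2 ∧
        0 < ‖pauliX S (wState n) x‖ ^ 2) :
    S.card = i + 1 := by
  obtain ⟨x, hx, hpx⟩ := h1
  obtain ⟨y, hy, hpy⟩ := h2
  have hwx := hammingWt_add_one_eq_card_or_of_pauliX_wState_ne_zero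
    (norm_ne_zero_iff.mp (sq_pos_iff.mp hpx))
  have hwy := hammingWt_add_one_eq_card_or_of_pauliX_wState_ne_zero
    (norm_ne_zero_iff.mp (sq_pos_iff.mp hpy))
  omega

theorem stmt3 (n : ℕ) (hn : 2 ≤ n) (S : Finset (Fin n)) (i : ℕ) (hi : i + 2 ≤ n)
    (h1 : ∃ x : Fin n → ZMod 2, hammingWt x = i ∧
        0 < ‖pauliX S (wState n) x‖ ^ 2)
    (h2 : ∃ x : Fin n → ZMod 2, hammingWt x = i + 2 ∧
        0 < ‖pauliX S (wState n) x‖ ^ 2) :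
    S.card = i + 1 :=
  stmt3_general n S i h1 h2
end

section
/- (Post-measurement state of the anonymous entanglement protocol is an EPR pair.) Let n ≥ 2 and let s, r ∈ Fin n be distinct. Let P be the orthogonal projection of EuclideanSpace ℂ (Fin n → ZMod 2) onto the span of the computational-basis vectors |x⟩ with x_j = 0 for all j ∉ {s,r}. Then P ψ_W = (1/√n)(|e_s⟩ + |e_r⟩), where e_s and e_r are the bitstrings with a single 1 at position s and r respectively; its norm is √(2/n), and the normalized post-measurement state ‖Pψ_W‖⁻¹ • Pψ_W is the vector with amplitude 1/√2 on each of e_s and e_r and amplitude 0 elsewhere, i.e., the maximally entangled pair (|01⟩_{sr} + |10⟩_{sr})/√2 shared between s and r. -/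
open EuclideanSpace

section ProjectionOntoCoordinates

variable {𝕜 ι : Type*} [RCLike 𝕜] [Fintype ι] [DecidableEq ι]

theorem EuclideanSpace.starProjection_span_single_apply (p : ι → Prop) [DecidablePred p]
    (ψ : EuclideanSpace 𝕜 ι) (x : ι) :
    (Submodule.span 𝕜 {v | ∃ y, p y ∧ v = single y (1 : 𝕜)}).starProjection ψ x =
      if p x then ψ x else 0 := by
  set K := Submodule.span 𝕜 {v | ∃ y, p y ∧ v = single y (1 : 𝕜)}
  set φ : EuclideanSpace 𝕜 ι := WithLp.toLp 2 fun x => if p x then ψ x else 0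
  have hφK : φ ∈ K := by
    rw [← (basisFun ι 𝕜).sum_repr φ]
    refine Submodule.sum_mem _ fun y _ => ?_
    rw [basisFun_repr, basisFun_apply]
    by_cases hy : p y
    · exact K.smul_mem _ (Submodule.subset_span ⟨y, hy, rfl⟩)
    · simp [φ, hy]
  have hψφ : ∀ w ∈ K, inner 𝕜 (ψ - φ) w = 0 := by
    intro w hw
    refine Submodule.mem_orthogonal_singleton_iff_inner_right.1 (Submodule.span_le.2 ?_ hw)
    rintro _ ⟨y, hy, rfl⟩
    rw [SetLike.mem_coe, Submodule.mem_orthogonal_singleton_iff_inner_right, inner_single_right]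
    simp [φ, hy]
  rw [K.eq_starProjection_of_mem_of_inner_eq_zero hφK hψφ]

end ProjectionOntoCoordinates

section TwoPoints

variable {𝕜 ι : Type*} [RCLike 𝕜] [DecidableEq ι] {a b : ι}

theorem EuclideanSpace.smul_single_add_single_apply (hab : a ≠ b) (c : 𝕜) (x : ι) :
    (c • (single a 1 + single b 1) : EuclideanSpace 𝕜 ι) x = if x = a ∨ x = b then c else 0 := by
  by_cases hxa : x = a
  · subst hxa; simp [hab]
  · by_cases hxb : x = b
    · subst hxb; simp [hxa]
    · simp [hxa, hxb]

theorem EuclideanSpace.norm_single_add_single [Fintype ι] (hab : a ≠ b) :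
    ‖(single a 1 + single b 1 : EuclideanSpace 𝕜 ι)‖ = √2 := by
  have horth : inner 𝕜 (single a (1 : 𝕜)) (single b 1) = 0 := by
    simp [inner_single_left, hab.symm]
  rw [← Real.sqrt_mul_self (norm_nonneg _),
    norm_add_sq_eq_norm_sq_add_norm_sq_of_inner_eq_zero _ _ horth]
  norm_num

end TwoPoints

theorem eVec_injective {n : ℕ} : Function.Injective (eVec (n := n)) := by
  intro i j h
  simpa [eVec] using congrFun h i

theorem hammingWt_eq_one_iff {n : ℕ} {x : Fin n → ZMod 2} : hammingWt x = 1 ↔ ∃ i, x = eVec i := by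
  simp only [hammingWt, Finset.card_eq_one, Finset.ext_iff, Finset.mem_filter, Finset.mem_univ,
    true_and, Finset.mem_singleton, funext_iff, eVec]
  refine exists_congr fun i => forall_congr' fun j => ?_
  split_ifs with hj
  · simp [hj]
  · simp only [hj, iff_false]
    generalize x j = t
    revert t
    decide

theorem eVec_supported_iff {n : ℕ} {i s r : Fin n} :
    (∀ j, j ≠ s → j ≠ r → eVec i j = 0) ↔ i = s ∨ i = r := by
  constructor
  · intro h
    by_contra! hi
    simpa [eVec] using h i hi.1 hi.2
  · rintro (rfl | rfl) j hjs hjr <;> simp [eVec, hjs, hjr]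

theorem wState_apply (n : ℕ) (x : Fin n → ZMod 2) :
    wState n x = if ∃ i, x = eVec i then ((1 / √n : ℝ) : ℂ) else 0 := by
  simp only [wState, hammingWt_eq_one_iff]

theorem wState_restrict_apply {n : ℕ} (s r : Fin n) (x : Fin n → ZMod 2) :
    (if ∀ j, j ≠ s → j ≠ r → x j = 0 then wState n x else 0) =
      if x = eVec s ∨ x = eVec r then ((1 / √n : ℝ) : ℂ) else 0 := by
  rw [wState_apply]
  by_cases hx : x = eVec s ∨ x = eVec r
  · have hsupp : ∀ j, j ≠ s → j ≠ r → x j = 0 := by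
      rcases hx with rfl | rfl <;> exact eVec_supported_iff.2 (by simp)
    have hw : ∃ i, x = eVec i := hx.elim (⟨s, ·⟩) (⟨r, ·⟩)
    rw [if_pos hsupp, if_pos hw, if_pos hx]
  · rw [if_neg hx]
    split_ifs with hsupp hw <;> try rfl
    obtain ⟨i, rfl⟩ := hw
    rcases eVec_supported_iff.1 hsupp with rfl | rfl <;> simp at hx

theorem stmt8_general (n : ℕ) (s r : Fin n) (hsr : s ≠ r)
    (K : Submodule ℂ (EuclideanSpace ℂ (Fin n → ZMod 2)))
    (hK : K = Submodule.span ℂ {v | ∃ x : Fin n → ZMod 2,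
        (∀ j, j ≠ s → j ≠ r → x j = 0) ∧ v = EuclideanSpace.single x (1 : ℂ)}) :
    ((Submodule.orthogonalProjection K (wState n) : EuclideanSpace ℂ (Fin n → ZMod 2)) =
        ((1 / Real.sqrt n : ℝ) : ℂ) •
          (EuclideanSpace.single (eVec s) (1 : ℂ) +
            EuclideanSpace.single (eVec r) (1 : ℂ))) ∧
    (‖(Submodule.orthogonalProjection K (wState n) : EuclideanSpace ℂ (Fin n → ZMod 2))‖ =
        Real.sqrt (2 / n)) ∧
    (∀ x : Fin n → ZMod 2,
      (‖(Submodule.orthogonalProjection K (wState n) : EuclideanSpace ℂ (Fin n → ZMod 2))‖⁻¹ •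
        (Submodule.orthogonalProjection K (wState n) : EuclideanSpace ℂ (Fin n → ZMod 2))) x =
      if x = eVec s ∨ x = eVec r then ((1 / Real.sqrt 2 : ℝ) : ℂ) else 0) := by
  have hsr' : eVec s ≠ eVec r := eVec_injective.ne hsr
  have hproj : (K.orthogonalProjectionOnto (wState n) : EuclideanSpace ℂ (Fin n → ZMod 2)) =
      ((1 / √n : ℝ) : ℂ) • (single (eVec s) 1 + single (eVec r) 1) := by
    subst hK
    ext x
    rw [← Submodule.starProjection_apply, starProjection_span_single_apply,
      smul_single_add_single_apply hsr', wState_restrict_apply]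
  have hnorm : ‖(K.orthogonalProjectionOnto (wState n) : EuclideanSpace ℂ (Fin n → ZMod 2))‖ =
      √(2 / n) := by
    rw [hproj, norm_smul, norm_single_add_single hsr', Complex.norm_real, Real.norm_eq_abs,
      abs_of_nonneg (by positivity), Real.sqrt_div zero_le_two]
    ring
  refine ⟨hproj, hnorm, fun x => ?_⟩
  have hsqrt : √(n : ℝ) ≠ 0 := by positivity [s.pos]
  rw [hnorm, PiLp.smul_apply, hproj, smul_single_add_single_apply hsr']
  split_ifs
  · rw [Complex.real_smul, ← Complex.ofReal_mul, Real.sqrt_div zero_le_two]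
    field_simp
  · exact smul_zero _

theorem stmt8 (n : ℕ) (hn : 2 ≤ n) (s r : Fin n) (hsr : s ≠ r)
    (K : Submodule ℂ (EuclideanSpace ℂ (Fin n → ZMod 2)))
    (hK : K = Submodule.span ℂ {v | ∃ x : Fin n → ZMod 2,
        (∀ j, j ≠ s → j ≠ r → x j = 0) ∧ v = EuclideanSpace.single x (1 : ℂ)}) :
    ((Submodule.orthogonalProjection K (wState n) : EuclideanSpace ℂ (Fin n → ZMod 2)) =
        ((1 / Real.sqrt n : ℝ) : ℂ) •
          (EuclideanSpace.single (eVec s) (1 : ℂ) +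
            EuclideanSpace.single (eVec r) (1 : ℂ))) ∧
    (‖(Submodule.orthogonalProjection K (wState n) : EuclideanSpace ℂ (Fin n → ZMod 2))‖ =
        Real.sqrt (2 / n)) ∧
    (∀ x : Fin n → ZMod 2,
      (‖(Submodule.orthogonalProjection K (wState n) : EuclideanSpace ℂ (Fin n → ZMod 2))‖⁻¹ •
        (Submodule.orthogonalProjection K (wState n) : EuclideanSpace ℂ (Fin n → ZMod 2))) x =
      if x = eVec s ∨ x = eVec r then ((1 / Real.sqrt 2 : ℝ) : ℂ) else 0) :=
  stmt8_general n s r hsr K hK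
end
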